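/- Let p be an odd prime not dividing gcd(P,Q) nor Q, and let z = z_U(p) be the entry point of p in the nondegenerate Lucas sequence U(P,Q). Then v_p(U_{pz}) = v_p(U_z) + 1. -/
import Mathlib

def lucasU (P Q : ℤ) : ℕ → ℤ
  | 0 => 0
  | 1 => 1
  | (n + 2) => P * lucasU P Q (n + 1) - Q * lucasU P Q n

lemma lucasU_two (P Q : ℤ) (n : ℕ) :
    lucasU P Q (n + 2) = P * lucasU P Q (n + 1) - Q * lucasU P Q n := rfl

lemma lucasU_add (P Q : ℤ) (n m : ℕ) :
    lucasU P Q (m + n + 1) =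
      lucasU P Q (m + 1) * lucasU P Q (n + 1) - Q * lucasU P Q m * lucasU P Q n := by
  induction n using Nat.twoStepInduction generalizing m with
  | zero => simp [lucasU]
  | one => simp [lucasU, lucasU_two]; ring
  | more n ih1 ih2 =>
    have e : m + (n + 2) + 1 = (m + n + 1) + 2 := by ring
    rw [e, lucasU_two]
    have e2 : m + n + 1 + 1 = m + (n + 1) + 1 := by ring
    rw [e2, ih2, ih1, lucasU_two P Q (n + 1), lucasU_two P Q n]
    ring

theorem vp_lucasU_mul_entry (p : ℕ) (hp : p.Prime) (hodd : Odd p)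
    (P Q : ℤ) (hP : P ≠ 0) (hQ : Q ≠ 0)
    (hpPQ : ¬ (p : ℤ) ∣ gcd P Q) (hpQ : ¬ (p : ℤ) ∣ Q)
    (hnd : ∀ n : ℕ, 1 ≤ n → lucasU P Q n ≠ 0)
    (z : ℕ) (hz : IsLeast {n : ℕ | 1 ≤ n ∧ (p : ℤ) ∣ lucasU P Q n} z) :
    padicValInt p (lucasU P Q (p * z)) = padicValInt p (lucasU P Q z) + 1 := by
  haveI : Fact p.Prime := ⟨hp⟩
  have hpprime : Prime (p : ℤ) := Nat.prime_iff_prime_int.mp hp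
  have hpz : (p : ℤ) ∣ lucasU P Q z := hz.1.2
  have hz1 : 1 ≤ z := hz.1.1
  have hp2le : 2 ≤ p := hp.two_le
  have hpne2 : p ≠ 2 := by rintro rfl; simp [Nat.odd_iff] at hodd
  have hp3 : 3 ≤ p := by omega
  -- z ≥ 2
  have hz2 : 2 ≤ z := by
    rcases Nat.lt_or_ge z 2 with h | h
    · have hz1' : z = 1 := by omega
      rw [hz1'] at hpz
      have : (p : ℤ) ∣ 1 := by simpa [lucasU] using hpz
      have := Int.le_of_dvd one_pos this
      omega
    · exact h
  obtain ⟨w, rfl⟩ : ∃ w, z = w + 1 := ⟨z - 1, by omega⟩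
  set s := lucasU P Q (w + 1) with hs_def
  set t := lucasU P Q (w + 2) with ht_def
  set r := lucasU P Q w with hr_def
  have ht : t = P * s - Q * r := lucasU_two P Q w
  -- p does not divide t
  have hpt : ¬ (p : ℤ) ∣ t := by
    intro hdvd
    have h1 : (p : ℤ) ∣ Q * r := by
      have h2 : (p : ℤ) ∣ P * s := hpz.mul_left P
      have := dvd_sub h2 hdvd
      rw [ht] at this
      simpa using this
    have h3 : (p : ℤ) ∣ r := (hpprime.dvd_mul.mp h1).resolve_left hpQ
    have h4 : w + 1 ≤ w := hz.2 ⟨by omega, h3⟩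
    omega
  -- recurrences for the subsequences along multiples of z = w+1
  have hrec1 : ∀ k, lucasU P Q ((k + 1) * (w + 1)) =
      s * lucasU P Q (k * (w + 1) + 1) + (t - P * s) * lucasU P Q (k * (w + 1)) := by
    intro k
    have e : (k + 1) * (w + 1) = k * (w + 1) + w + 1 := by ring
    rw [e, lucasU_add, ht]
    ring
  have hrec2 : ∀ k, lucasU P Q ((k + 1) * (w + 1) + 1) =
      t * lucasU P Q (k * (w + 1) + 1) - Q * s * lucasU P Q (k * (w + 1)) := by
    intro k
    have e : (k + 1) * (w + 1) + 1 = k * (w + 1) + (w + 1) + 1 := by ring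
    rw [e, lucasU_add]
    ring
  -- main induction
  have key : ∀ j : ℕ, ∃ x y : ℤ,
      lucasU P Q ((j + 2) * (w + 1)) =
        ((j : ℤ) + 2) * s * t ^ (j + 1) - P * (((j + 2).choose 2 : ℕ) : ℤ) * s ^ 2 * t ^ j
          + s ^ 3 * x ∧
      lucasU P Q ((j + 2) * (w + 1) + 1) = t ^ (j + 2) + s ^ 2 * y := by
    intro j
    induction j with
    | zero =>
      refine ⟨0, -Q, ?_, ?_⟩
      · rw [show (0 + 2 : ℕ) = 1 + 1 from rfl, hrec1 1]
        simp only [one_mul]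
        rw [show w + 1 + 1 = w + 2 from rfl]
        norm_num
        ring
      · rw [show (0 + 2 : ℕ) = 1 + 1 from rfl, hrec2 1]
        simp only [one_mul]
        rw [show w + 1 + 1 = w + 2 from rfl]
        norm_num
        ring
    | succ j ih =>
      obtain ⟨x, y, ha, hb⟩ := ih
      have hc : ((((j + 2) + 1).choose 2 : ℕ) : ℤ) = (((j + 2).choose 2 : ℕ) : ℤ) + (j + 2) := by
        rw [Nat.choose_succ_succ (j + 2) 1, Nat.choose_one_right]
        push_cast
        ring
      refine ⟨y + t * x + P ^ 2 * (((j + 2).choose 2 : ℕ) : ℤ) * t ^ j - P * s * x,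
        t * y - Q * ((j : ℤ) + 2) * t ^ (j + 1)
          + Q * P * (((j + 2).choose 2 : ℕ) : ℤ) * s * t ^ j - Q * s ^ 2 * x, ?_, ?_⟩
      · have e : (j + 1 + 2) = (j + 2) + 1 := by omega
        rw [e, hrec1 (j + 2), ha, hb, hc]
        push_cast
        ring
      · have e : (j + 1 + 2) = (j + 2) + 1 := by omega
        rw [e, hrec2 (j + 2), ha, hb]
        push_cast
        ring
  obtain ⟨x, y, ha, -⟩ := key (p - 2)
  have e1 : p - 2 + 2 = p := by omega
  have e2 : p - 2 + 1 = p - 1 := by omega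
  rw [e1, e2] at ha
  have e3 : ((p - 2 : ℕ) : ℤ) + 2 = (p : ℤ) := by omega
  rw [e3] at ha
  set a := padicValInt p s with ha_def
  have hs0 : s ≠ 0 := hnd (w + 1) (by omega)
  have hU0 : lucasU P Q (p * (w + 1)) ≠ 0 := hnd _ (Nat.one_le_iff_ne_zero.mpr (Nat.mul_ne_zero hp.ne_zero (by omega)))
  have hsd : (p : ℤ) ^ a ∣ s := padicValInt_dvd s
  have hsnd : ¬ (p : ℤ) ^ (a + 1) ∣ s := by
    rw [padicValInt_dvd_iff]
    push_neg
    exact ⟨hs0, by omega⟩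
  have ha1 : 1 ≤ a := by
    have := (padicValInt_dvd_iff 1 s).mp (by simpa using hpz)
    rcases this with h | h
    · exact absurd h hs0
    · exact h
  have hCp : (p : ℤ) ∣ ((p.choose 2 : ℕ) : ℤ) :=
    Int.natCast_dvd_natCast.mpr (hp.dvd_choose_self (by norm_num) (by omega))
  have hpt' : ¬ (p : ℤ) ∣ t ^ (p - 1) := fun h => hpt (hpprime.dvd_of_dvd_pow h)
  -- divisibility of the three terms
  have hd2 : ((p : ℤ)) ^ (a + 2) ∣ P * ((p.choose 2 : ℕ) : ℤ) * s ^ 2 * t ^ (p - 2) := by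
    have h1 : (p : ℤ) ^ (1 + (a + 1)) ∣ ((p.choose 2 : ℕ) : ℤ) * s ^ 2 := by
      rw [pow_add, pow_one]
      exact mul_dvd_mul hCp ((pow_dvd_pow _ (by omega : a + 1 ≤ a * 2)).trans
        (by rw [pow_mul]; exact pow_dvd_pow_of_dvd hsd 2))
    have e : 1 + (a + 1) = a + 2 := by omega
    rw [e] at h1
    have e2 : P * ((p.choose 2 : ℕ) : ℤ) * s ^ 2 * t ^ (p - 2)
        = (((p.choose 2 : ℕ) : ℤ) * s ^ 2) * (P * t ^ (p - 2)) := by ring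
    rw [e2]
    exact h1.mul_right _
  have hd3 : ((p : ℤ)) ^ (a + 2) ∣ s ^ 3 * x := by
    have h1 : (p : ℤ) ^ (a + 2) ∣ s ^ 3 :=
      (pow_dvd_pow _ (by omega : a + 2 ≤ a * 3)).trans
        (by rw [pow_mul]; exact pow_dvd_pow_of_dvd hsd 3)
    exact h1.mul_right x
  have hd1 : ((p : ℤ)) ^ (a + 1) ∣ (p : ℤ) * s * t ^ (p - 1) := by
    have h1 : (p : ℤ) ^ (1 + a) ∣ (p : ℤ) * s := by
      rw [pow_add, pow_one]; exact mul_dvd_mul_left _ hsd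
    have e : 1 + a = a + 1 := by omega
    rw [e] at h1
    exact h1.mul_right _
  -- p^(a+1) divides U(pz)
  have hdvd1 : ((p : ℤ)) ^ (a + 1) ∣ lucasU P Q (p * (w + 1)) := by
    rw [ha]
    exact dvd_add (dvd_sub hd1 ((pow_dvd_pow _ (by omega : a + 1 ≤ a + 2)).trans hd2))
      ((pow_dvd_pow _ (by omega : a + 1 ≤ a + 2)).trans hd3)
  -- p^(a+2) does not divide U(pz)
  have hndvd : ¬ ((p : ℤ)) ^ (a + 2) ∣ lucasU P Q (p * (w + 1)) := by
    intro h
    have hm1 : ((p : ℤ)) ^ (a + 2) ∣ (p : ℤ) * s * t ^ (p - 1) := by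
      have : (p : ℤ) * s * t ^ (p - 1) =
          lucasU P Q (p * (w + 1))
            + P * ((p.choose 2 : ℕ) : ℤ) * s ^ 2 * t ^ (p - 2) - s ^ 3 * x := by
        rw [ha]; ring
      rw [this]
      exact dvd_sub (dvd_add h hd2) hd3
    have hm2 : ((p : ℤ)) ^ (a + 1) ∣ s * t ^ (p - 1) := by
      have hpne : (p : ℤ) ≠ 0 := by exact_mod_cast hp.ne_zero
      have : (p : ℤ) * ((p : ℤ) ^ (a + 1)) ∣ (p : ℤ) * (s * t ^ (p - 1)) := by
        have e : (p : ℤ) * (p : ℤ) ^ (a + 1) = (p : ℤ) ^ (a + 2) := by ring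
        rw [e]
        convert hm1 using 1
        ring
      exact (mul_dvd_mul_iff_left hpne).mp this
    exact hsnd (hpprime.pow_dvd_of_dvd_mul_right _ hpt' hm2)
  -- conclude
  have hfinal := (padicValInt_dvd_iff (a + 1) (lucasU P Q (p * (w + 1)))).mp hdvd1
  rcases hfinal with h | h
  · exact absurd h hU0
  · have hle : padicValInt p (lucasU P Q (p * (w + 1))) ≤ a + 1 := by
      by_contra hcon
      push_neg at hcon
      exact hndvd ((padicValInt_dvd_iff (a + 2) _).mpr (Or.inr (by omega)))
    omega
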